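/- arXiv:2511.08397 — 4 statements merged into one kernel-verified Lean document; each statement's English description precedes it below -/
import Mathlib

section
/- Every rank-one convex function f defined on a ball B_{2r}(x) ⊂ ℝ^(m×n) is Lipschitz on B_r(x), with Lipschitz constant at most C(n) · osc(f, B_{2r}(x)) / r, where osc denotes the oscillation (sup minus inf) of f. -/
open Metric MeasureTheory Set

noncomputable section

/-- The space of m×n real matrices with the Frobenius (Euclidean) norm. -/
abbrev Mat (m n : ℕ) := EuclideanSpace ℝ (Fin m × Fin n)

/-- The rank-one matrix a ⊗ b with entries aᵢbⱼ. -/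
def tensor {m n : ℕ} (a : EuclideanSpace ℝ (Fin m)) (b : EuclideanSpace ℝ (Fin n)) : Mat m n :=
  WithLp.toLp 2 (fun p : Fin m × Fin n => a p.1 * b p.2)

def IsRankOne {m n : ℕ} (M : Mat m n) : Prop := ∃ a b, M = tensor a b

/-- f is rank-one convex on U: f is convex along every rank-one segment contained in U. -/
def RankOneConvexOn {m n : ℕ} (U : Set (Mat m n)) (f : Mat m n → ℝ) : Prop :=
  ∀ x y, x ∈ U → y ∈ U → segment ℝ x y ⊆ U → IsRankOne (y - x) →
    ∀ t ∈ Icc (0:ℝ) 1, f ((1 - t) • x + t • y) ≤ (1 - t) * f x + t * f y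

/-!
Interpolate from `z` to `y` by replacing one column at a time. Consecutive matrices differ by a
single column, a rank-one matrix, and the squared lengths of the `n` steps add up to `‖y - z‖²`, so
by Cauchy–Schwarz their lengths add up to at most `√n ‖y - z‖`. Along each step, convexity bounds
the increment of `f` by `osc f B_{2r} / s` times the step length, provided the step can be
prolonged by `s` inside `B_{2r}`. For `s = r / √n` it can: the prolonged point takes its first
columns from a matrix within `s` of `y` and the others from `z`, so its squared distance to `x` is
below `(r + s)² + r² < (2r)²` when `n ≥ 2`, and its distance below `r + s = 2r` when `n = 1`.
-/

variable {α : Type*}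

def osc (f : α → ℝ) (s : Set α) : ℝ := sSup (f '' s) - sInf (f '' s)

lemma sub_le_osc {f : α → ℝ} {s : Set α} (hba : BddAbove (f '' s)) (hbb : BddBelow (f '' s))
    {a b : α} (ha : a ∈ s) (hb : b ∈ s) : f a - f b ≤ osc f s :=
  sub_le_sub (le_csSup hba ⟨a, ha, rfl⟩) (csInf_le hbb ⟨b, hb, rfl⟩)

variable {m n : ℕ}

lemma IsRankOne.smul {M : Mat m n} (h : IsRankOne M) (c : ℝ) : IsRankOne (c • M) := by
  obtain ⟨a, b, rfl⟩ := h
  refine ⟨c • a, b, PiLp.ext fun p => ?_⟩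
  simp [tensor, mul_assoc]

theorem RankOneConvexOn.sub_le_osc_div_mul_norm {U : Set (Mat m n)} {f : Mat m n → ℝ}
    (hU : Convex ℝ U) (hf : RankOneConvexOn U f)
    (hba : BddAbove (f '' U)) (hbb : BddBelow (f '' U)) {u d : Mat m n} (hu : u ∈ U)
    (hd : IsRankOne d) {s : ℝ} (hs : 0 < s) (hw : u + d + (s / ‖d‖) • d ∈ U) :
    f (u + d) - f u ≤ osc f U / s * ‖d‖ := by
  rcases eq_or_ne d 0 with rfl | hd0
  · simp
  set L := ‖d‖
  have hL : 0 < L := norm_pos_iff.2 hd0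
  set w := u + d + (s / L) • d
  have hwu : w - u = ((L + s) / L) • d := by
    simp only [w, add_div, div_self hL.ne', add_smul, one_smul]; abel
  set t := L / (L + s)
  have hmid : (1 - t) • u + t • w = u + d := by
    have : t • (w - u) = d := by
      rw [hwu, smul_smul, div_mul_div_cancel₀ (by positivity), div_self hL.ne', one_smul]
    rw [← this]; module
  have ht : t ∈ Icc (0 : ℝ) 1 := ⟨by positivity, div_le_one_of_le₀ (by linarith) (by positivity)⟩
  have hconv := hf u w hu hw (hU.segment_subset hu hw) (hwu ▸ hd.smul _) t ht
  rw [hmid] at hconv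
  have hosc : f w - f u ≤ osc f U := sub_le_osc hba hbb hw hu
  have hosc0 : 0 ≤ osc f U := by simpa using sub_le_osc hba hbb hu hu
  calc f (u + d) - f u ≤ t * (f w - f u) := by linarith
    _ ≤ t * osc f U := by gcongr
    _ ≤ L / s * osc f U := by gcongr; exact div_le_div_of_nonneg_left hL.le hs (by linarith)
    _ = osc f U / s * L := by ring

def mixCols (k : ℕ) (a b : Mat m n) : Mat m n :=
  WithLp.toLp 2 fun p => if (p.2 : ℕ) < k then a p else b p

section mixCols

variable {k : ℕ} {a b : Mat m n}

@[simp]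
lemma mixCols_apply (p : Fin m × Fin n) :
    mixCols k a b p = if (p.2 : ℕ) < k then a p else b p := rfl

lemma mixCols_zero : mixCols 0 a b = b := PiLp.ext fun p => by simp

lemma mixCols_of_le (hk : n ≤ k) : mixCols k a b = a :=
  PiLp.ext fun p => by simp [p.2.isLt.trans_le hk]

lemma mixCols_succ_sub_apply (p : Fin m × Fin n) :
    (mixCols (k + 1) a b - mixCols k a b) p = if (p.2 : ℕ) = k then a p - b p else 0 := by
  simp only [PiLp.sub_apply, mixCols_apply]
  rcases lt_trichotomy (p.2 : ℕ) k with h | h | h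
  · simp [h, h.ne, Nat.lt_succ_of_lt h]
  · simp [h]
  · simp [h.ne', show ¬ (p.2 : ℕ) < k by omega, show ¬ (p.2 : ℕ) < k + 1 by omega]

lemma isRankOne_mixCols_succ_sub (hk : k < n) :
    IsRankOne (mixCols (k + 1) a b - mixCols k a b) := by
  refine ⟨WithLp.toLp 2 fun i => a (i, ⟨k, hk⟩) - b (i, ⟨k, hk⟩),
    WithLp.toLp 2 fun j => if (j : ℕ) = k then 1 else 0, PiLp.ext fun ⟨i, j⟩ => ?_⟩
  rw [mixCols_succ_sub_apply]
  by_cases h : (j : ℕ) = k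
  · obtain rfl : j = ⟨k, hk⟩ := Fin.ext h
    simp [tensor]
  · simp [tensor, h]

lemma mixCols_add (v : Mat m n) (hv : ∀ p : Fin m × Fin n, k ≤ p.2 → v p = 0) :
    mixCols k a b + v = mixCols k (a + v) b := by
  ext p
  by_cases h : (p.2 : ℕ) < k
  · simp [h]
  · simp [h, hv p (not_lt.1 h)]

lemma dist_mixCols_sq_le (x : Mat m n) :
    dist (mixCols k a b) x ^ 2 ≤ dist a x ^ 2 + dist b x ^ 2 := by
  simp only [EuclideanSpace.dist_eq, Real.sq_sqrt (Finset.sum_nonneg fun _ _ => sq_nonneg _),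
    ← Finset.sum_add_distrib]
  refine Finset.sum_le_sum fun p _ => ?_
  rw [mixCols_apply]
  split_ifs <;> simp

lemma sum_norm_mixCols_succ_sub_sq :
    ∑ k ∈ Finset.range n, ‖mixCols (k + 1) a b - mixCols k a b‖ ^ 2 = ‖a - b‖ ^ 2 := by
  simp only [EuclideanSpace.norm_sq_eq, mixCols_succ_sub_apply]
  rw [Finset.sum_comm]
  refine Finset.sum_congr rfl fun p _ => ?_
  simp [apply_ite, p.2.isLt]

lemma sum_norm_mixCols_succ_sub_le :
    ∑ k ∈ Finset.range n, ‖mixCols (k + 1) a b - mixCols k a b‖ ≤ √n * ‖a - b‖ := by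
  have hsq := sq_sum_le_card_mul_sum_sq (s := Finset.range n)
    (f := fun k => ‖mixCols (k + 1) a b - mixCols k a b‖)
  rw [Finset.card_range, sum_norm_mixCols_succ_sub_sq] at hsq
  rw [← Real.sqrt_sq (norm_nonneg (a - b)), ← Real.sqrt_mul (Nat.cast_nonneg n)]
  exact Real.le_sqrt_of_sq_le hsq

end mixCols

lemma mixCols_succ_add_mem_ball {x y z v : Mat m n} {r : ℝ} (hn : 0 < n) (hy : y ∈ ball x r)
    (hz : z ∈ ball x r) (hv : ‖v‖ ≤ r / √n) (k : ℕ) :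
    mixCols (k + 1) (y + v) z ∈ ball x (2 * r) := by
  have hr : 0 < r := pos_of_mem_ball hy
  have hyv : dist (y + v) x < r + r / √n := by
    calc dist (y + v) x ≤ dist y x + ‖v‖ := by
          rw [dist_eq_norm, dist_eq_norm, add_sub_right_comm]; exact norm_add_le _ _
      _ < r + r / √n := by linarith [mem_ball.1 hy]
  rw [mem_ball]
  rcases Nat.lt_or_ge n 2 with hn2 | hn2
  · obtain rfl : n = 1 := by omega
    rw [mixCols_of_le (by omega)]
    simpa [two_mul] using hyv
  · set q := √n
    have hq : 0 < q := by positivity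
    have hq2 : 2 ≤ q ^ 2 := by rw [Real.sq_sqrt (by positivity)]; exact_mod_cast hn2
    have hq14 : 1.4 ≤ q := by nlinarith
    have hroom : (r + r / q) ^ 2 + r ^ 2 < (2 * r) ^ 2 := by
      set a := r / q
      have ha : 0 < a := by positivity
      have hra : r = a * q := (div_mul_cancel₀ r hq.ne').symm
      have hquad : 0 < 2 * q ^ 2 - 2 * q - 1 := by nlinarith
      rw [hra]
      nlinarith [mul_pos (mul_pos ha ha) hquad]
    refine lt_of_pow_lt_pow_left₀ 2 (by positivity) ?_
    calc dist (mixCols (k + 1) (y + v) z) x ^ 2 ≤ dist (y + v) x ^ 2 + dist z x ^ 2 :=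
          dist_mixCols_sq_le x
      _ < (r + r / q) ^ 2 + r ^ 2 := by gcongr; exact mem_ball.1 hz
      _ < (2 * r) ^ 2 := hroom

lemma mixCols_mem_ball {x y z : Mat m n} {r : ℝ} (hy : y ∈ ball x r) (hz : z ∈ ball x r)
    (k : ℕ) : mixCols k y z ∈ ball x (2 * r) := by
  have hr : 0 < r := pos_of_mem_ball hy
  rw [mem_ball]
  refine lt_of_pow_lt_pow_left₀ 2 (by positivity) ?_
  calc dist (mixCols k y z) x ^ 2 ≤ dist y x ^ 2 + dist z x ^ 2 := dist_mixCols_sq_le x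
    _ < r ^ 2 + r ^ 2 := by gcongr <;> [exact mem_ball.1 hy; exact mem_ball.1 hz]
    _ ≤ (2 * r) ^ 2 := by nlinarith

theorem RankOneConvexOn.mixCols_succ_sub_le {x y z : Mat m n} {r : ℝ} {f : Mat m n → ℝ}
    (hf : RankOneConvexOn (ball x (2 * r)) f)
    (hba : BddAbove (f '' ball x (2 * r))) (hbb : BddBelow (f '' ball x (2 * r)))
    (hy : y ∈ ball x r) (hz : z ∈ ball x r) {k : ℕ} (hk : k < n) :
    f (mixCols (k + 1) y z) - f (mixCols k y z) ≤
      osc f (ball x (2 * r)) / (r / √n) * ‖mixCols (k + 1) y z - mixCols k y z‖ := by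
  have hs : 0 < r / √n :=
    div_pos (pos_of_mem_ball hy) (Real.sqrt_pos.2 (Nat.cast_pos.2 (Nat.zero_lt_of_lt hk)))
  set d := mixCols (k + 1) y z - mixCols k y z
  have hd : ‖(r / √n / ‖d‖) • d‖ ≤ r / √n := by
    rcases eq_or_ne d 0 with hd | hd
    · simpa [hd] using hs.le
    · rw [norm_smul, Real.norm_of_nonneg (by positivity),
        div_mul_cancel₀ _ (norm_ne_zero_iff.2 hd)]
  have hw : mixCols k y z + d + (r / √n / ‖d‖) • d ∈ ball x (2 * r) := by
    rw [add_sub_cancel, mixCols_add]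
    · exact mixCols_succ_add_mem_ball (by omega) hy hz hd k
    · intro p hp
      rw [PiLp.smul_apply, mixCols_succ_sub_apply, if_neg (by omega), smul_zero]
  have h := hf.sub_le_osc_div_mul_norm (convex_ball _ _) hba hbb (mixCols_mem_ball hy hz k)
    (isRankOne_mixCols_succ_sub hk) hs hw
  rwa [add_sub_cancel] at h

theorem RankOneConvexOn.sub_le_of_mem_ball {x y z : Mat m n} {r : ℝ} {f : Mat m n → ℝ}
    (hf : RankOneConvexOn (ball x (2 * r)) f)
    (hba : BddAbove (f '' ball x (2 * r))) (hbb : BddBelow (f '' ball x (2 * r)))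
    (hy : y ∈ ball x r) (hz : z ∈ ball x r) :
    f y - f z ≤ n * osc f (ball x (2 * r)) / r * ‖y - z‖ := by
  rcases Nat.eq_zero_or_pos n with rfl | hn
  · simp [Subsingleton.elim y z]
  have hr : 0 < r := pos_of_mem_ball hy
  set D := osc f (ball x (2 * r))
  have hx : x ∈ ball x (2 * r) := mem_ball_self (by positivity)
  have hD : 0 ≤ D := by simpa using sub_le_osc hba hbb hx hx
  set g := fun k => mixCols k y z
  calc f y - f z = ∑ k ∈ Finset.range n, (f (g (k + 1)) - f (g k)) := by
        rw [Finset.sum_range_sub (fun k => f (g k)), show g n = y from mixCols_of_le le_rfl,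
          show g 0 = z from mixCols_zero]
    _ ≤ ∑ k ∈ Finset.range n, D / (r / √n) * ‖g (k + 1) - g k‖ :=
        Finset.sum_le_sum fun k hk => hf.mixCols_succ_sub_le hba hbb hy hz (Finset.mem_range.1 hk)
    _ = D / (r / √n) * ∑ k ∈ Finset.range n, ‖g (k + 1) - g k‖ := (Finset.mul_sum ..).symm
    _ ≤ D / (r / √n) * (√n * ‖y - z‖) := by gcongr; exact sum_norm_mixCols_succ_sub_le
    _ = n * D / r * ‖y - z‖ := by
        field_simp
        rw [Real.sq_sqrt (Nat.cast_nonneg n)]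
        ring

theorem stmt2_general {m n : ℕ} (x : Mat m n) (r : ℝ) (f : Mat m n → ℝ)
    (hf : RankOneConvexOn (ball x (2*r)) f)
    (hba : BddAbove (f '' ball x (2*r))) (hbb : BddBelow (f '' ball x (2*r))) :
    ∀ y ∈ ball x r, ∀ z ∈ ball x r,
      |f y - f z| ≤ (n * (sSup (f '' ball x (2*r)) - sInf (f '' ball x (2*r))) / r) * ‖y - z‖ := by
  intro y hy z hz
  rw [abs_sub_le_iff]
  refine ⟨hf.sub_le_of_mem_ball hba hbb hy hz, ?_⟩
  rw [norm_sub_rev]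
  exact hf.sub_le_of_mem_ball hba hbb hz hy

/-- Interior Lipschitz estimate for rank-one convex functions:
Lip(f, B_r(x)) ≤ n · osc(f, B_{2r}(x)) / r. -/
theorem stmt2 {m n : ℕ} (x : Mat m n) (r : ℝ) (hr : 0 < r) (f : Mat m n → ℝ)
    (hf : RankOneConvexOn (ball x (2*r)) f)
    (hba : BddAbove (f '' ball x (2*r))) (hbb : BddBelow (f '' ball x (2*r))) :
    ∀ y ∈ ball x r, ∀ z ∈ ball x r,
      |f y - f z| ≤ (n * (sSup (f '' ball x (2*r)) - sInf (f '' ball x (2*r))) / r) * ‖y - z‖ :=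
  stmt2_general x r f hf hba hbb
end
end

section
/- Let f : ℝⁿ → ℝ be convex, differentiable at x₀, with f(x₀) = 0 and ∇f(x₀) = 0. Suppose that for some t > 0 and all i = 1,…,n and all |h| < 1, one has 0 ≤ f(x₀ + h·eᵢ) ≤ t·h². Then f(x₀ + z) ≤ n·t·|z|² for all z with |z| < 1/√n; in particular, a paraboloid of opening 2n·t is tangent from above to f at x₀ on the ball of radius 1/√n. -/
/-!
Put `h = √n ‖z‖`. By Cauchy–Schwarz `∑ |zᵢ| ≤ h`, so `x₀ + z` lies in the cross-polytope
with vertices `x₀ ± h eᵢ` (centre `x₀` included). The sublevel set `{f ≤ t h²}` is convex and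
contains all these points by hypothesis, hence contains `x₀ + z`; and `t h² = n t ‖z‖²`.
-/

open Set

open Finset in
theorem Convex.sum_mem_of_zero_mem {E ι : Type*} [AddCommGroup E] [Module ℝ E] {s : Set E}
    (hs : Convex ℝ s) (h0 : (0 : E) ∈ s) {t : Finset ι} {w : ι → ℝ} {z : ι → E}
    (hw₀ : ∀ i ∈ t, 0 ≤ w i) (hw₁ : ∑ i ∈ t, w i ≤ 1) (hz : ∀ i ∈ t, z i ∈ s) :
    ∑ i ∈ t, w i • z i ∈ s := by
  set W := ∑ i ∈ t, w i
  rcases (sum_nonneg hw₀).eq_or_lt with hW | hW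
  · have hw : ∀ i ∈ t, w i = 0 := (sum_eq_zero_iff_of_nonneg hw₀).mp hW.symm
    rwa [sum_eq_zero fun i hi => by rw [hw i hi, zero_smul]]
  have hmean : ∑ i ∈ t, (w i / W) • z i ∈ s :=
    hs.sum_mem (fun i hi => div_nonneg (hw₀ i hi) hW.le) (by rw [← sum_div, div_self hW.ne']) hz
  convert hs.smul_mem_of_zero_mem h0 hmean ⟨hW.le, hw₁⟩ using 1
  rw [smul_sum]
  refine sum_congr rfl fun i _ => ?_
  rw [smul_smul, mul_div_cancel₀ _ hW.ne']

theorem ConvexOn.le_of_sum_abs_le {E ι : Type*} [AddCommGroup E] [Module ℝ E] [Fintype ι]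
    {f : E → ℝ} (hf : ConvexOn ℝ univ f) {x₀ : E} {v : ι → E} {h M : ℝ} (hh : 0 < h)
    (hx₀ : f x₀ ≤ M) (hv : ∀ i s, |s| = h → f (x₀ + s • v i) ≤ M)
    {c : ι → ℝ} (hc : ∑ i, |c i| ≤ h) :
    f (x₀ + ∑ i, c i • v i) ≤ M := by
  let K := (fun y => x₀ + y) ⁻¹' {x ∈ univ | f x ≤ M}
  have hK : Convex ℝ K := (hf.convex_le M).translate_preimage_right x₀
  let vertex (i : ι) : ℝ := if 0 ≤ c i then h else -h
  have hc_eq (i : ι) : c i = |c i| / h * vertex i := by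
    rcases le_or_gt 0 (c i) with hci | hci
    · simp [vertex, hci, abs_of_nonneg hci, hh.ne']
    · simp [vertex, hci.not_ge, abs_of_neg hci, hh.ne']
  -- `c i • v i = (|c i| / h) • (±h • v i)`, a subconvex combination of vertices
  have hmem : ∑ i, (|c i| / h) • (vertex i • v i) ∈ K := by
    refine hK.sum_mem_of_zero_mem (by simpa [K] using hx₀) (fun i _ => by positivity)
      (by rwa [← Finset.sum_div, div_le_one hh]) fun i _ => ?_
    refine ⟨trivial, hv i _ ?_⟩
    by_cases hci : 0 ≤ c i <;> simp [vertex, hci, abs_of_pos hh]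
  simpa only [smul_smul, ← hc_eq] using hmem.2

theorem EuclideanSpace.sum_abs_le_sqrt_card_mul_norm {ι : Type*} [Fintype ι]
    (x : EuclideanSpace ℝ ι) : ∑ i, |x i| ≤ √(Fintype.card ι) * ‖x‖ :=
  calc ∑ i, |x i| ≤ √(Fintype.card ι * ∑ i, |x i| ^ 2) :=
        Real.le_sqrt_of_sq_le (by
          simpa using sq_sum_le_card_mul_sum_sq (s := Finset.univ) (f := fun i => |x i|))
    _ = √(Fintype.card ι) * ‖x‖ := by
        rw [Real.sqrt_mul (Nat.cast_nonneg _), EuclideanSpace.norm_eq]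
        simp only [Real.norm_eq_abs]

theorem stmt7_general (n : ℕ) (f : EuclideanSpace ℝ (Fin n) → ℝ) (hf : ConvexOn ℝ univ f)
    (x₀ : EuclideanSpace ℝ (Fin n))
    (hf0 : f x₀ = 0) (t : ℝ) (ht : 0 < t)
    (hcoord : ∀ (i : Fin n) (h : ℝ), |h| < 1 →
      0 ≤ f (x₀ + h • EuclideanSpace.single i 1) ∧
        f (x₀ + h • EuclideanSpace.single i 1) ≤ t * h^2) :
    ∀ z : EuclideanSpace ℝ (Fin n), ‖z‖ < 1 / Real.sqrt n →
      f (x₀ + z) ≤ n * t * ‖z‖^2 := by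
  intro z hz
  have hn : 0 < √n := one_div_pos.mp ((norm_nonneg z).trans_lt hz)
  rcases eq_or_ne z 0 with rfl | hz0
  · simp [hf0]
  set h := √n * ‖z‖
  have hh : 0 < h := by positivity
  have hh1 : h < 1 := by rw [lt_div_iff₀ hn] at hz; linarith
  have hz_sum : ∑ i, z i • EuclideanSpace.single i (1 : ℝ) = z := by
    simpa using (EuclideanSpace.basisFun (Fin n) ℝ).sum_repr z
  calc f (x₀ + z) ≤ t * h ^ 2 := by
        rw [← hz_sum]
        refine hf.le_of_sum_abs_le hh (by rw [hf0]; positivity) (fun i s hs => ?_)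
          (by simpa using EuclideanSpace.sum_abs_le_sqrt_card_mul_norm z)
        simpa [← sq_abs s, hs] using (hcoord i s (hs ▸ hh1)).2
    _ = n * t * ‖z‖ ^ 2 := by rw [mul_pow, Real.sq_sqrt n.cast_nonneg]; ring

/-- Coordinate-direction paraboloid bounds plus convexity give a full paraboloid
bound on the ball of radius 1/√n. -/
theorem stmt7 (n : ℕ) (f : EuclideanSpace ℝ (Fin n) → ℝ) (hf : ConvexOn ℝ univ f)
    (x₀ : EuclideanSpace ℝ (Fin n))
    (hd : HasFDerivAt f (0 : EuclideanSpace ℝ (Fin n) →L[ℝ] ℝ) x₀)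
    (hf0 : f x₀ = 0) (t : ℝ) (ht : 0 < t)
    (hcoord : ∀ (i : Fin n) (h : ℝ), |h| < 1 →
      0 ≤ f (x₀ + h • EuclideanSpace.single i 1) ∧
        f (x₀ + h • EuclideanSpace.single i 1) ≤ t * h^2) :
    ∀ z : EuclideanSpace ℝ (Fin n), ‖z‖ < 1 / Real.sqrt n →
      f (x₀ + z) ≤ n * t * ‖z‖^2 :=
  stmt7_general n f hf x₀ hf0 t ht hcoord
end

section
/- Let f be rank-one convex on B₁ ⊂ ℝ^(m×n), differentiable at x₀ ∈ B_{1/2} with f(x₀) = 0 and Df(x₀) = 0, and suppose f(x) ≤ (A/2)|x − x₀|² on B₁ for some A ≥ 0. Then there exists C = C(n) such that |Df(x) − Df(x₀)| ≤ C·A·|x − x₀| for all x with |x − x₀| < 1/4 at which f is differentiable. -/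
open Metric MeasureTheory Set

noncomputable section

/-! Split `x - x₀` into its `m` rows, each a rank-one matrix. Midpoint convexity along one row at a
time turns the one-sided bound `f ≤ (A/2)|· - x₀|²` into the lower bound
`f x ≥ -(2^m - 1)(A/2)|x - x₀|²`. Convexity along a rank-one line through `x` then bounds `L M` by
the difference quotient `(sup f - f x)/t` over the ball of radius `t = |x - x₀|` about `x`, which is
`O(A t)`; testing `L` against the `m n` matrix units, all of rank one, bounds `‖L‖`. -/

lemma EuclideanSpace.norm_le_norm_of_abs_le {ι : Type*} [Fintype ι] {u v : EuclideanSpace ℝ ι}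
    (h : ∀ i, |u i| ≤ |v i|) : ‖u‖ ≤ ‖v‖ := by
  simp only [EuclideanSpace.norm_eq, Real.norm_eq_abs]
  exact Real.sqrt_le_sqrt (Finset.sum_le_sum fun i _ => pow_le_pow_left₀ (abs_nonneg _) (h i) 2)

lemma EuclideanSpace.opNorm_le_card_mul {ι : Type*} [Fintype ι] [DecidableEq ι]
    (L : EuclideanSpace ℝ ι →L[ℝ] ℝ) {B : ℝ} (hB : 0 ≤ B)
    (hL : ∀ i, |L (EuclideanSpace.single i 1)| ≤ B) : ‖L‖ ≤ Fintype.card ι * B := by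
  refine L.opNorm_le_bound (mul_nonneg (Nat.cast_nonneg _) hB) fun M => ?_
  have hsum : L M = ∑ i, M i * L (EuclideanSpace.single i 1) := by
    conv_lhs => rw [← (EuclideanSpace.basisFun ι ℝ).sum_repr M]
    simp [map_sum]
  calc ‖L M‖ ≤ ∑ i, |M i| * |L (EuclideanSpace.single i 1)| := by
        rw [Real.norm_eq_abs, hsum]
        simpa only [abs_mul] using
          Finset.abs_sum_le_sum_abs (fun i => M i * L (EuclideanSpace.single i 1)) Finset.univ
    _ ≤ ∑ _i : ι, ‖M‖ * B := by
        gcongr with i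
        · exact PiLp.norm_apply_le M i
        · exact hL i
    _ = Fintype.card ι * B * ‖M‖ := by simp; ring

section

variable {m n : ℕ}

namespace IsRankOne

lemma smul_s10 {M : Mat m n} (c : ℝ) (h : IsRankOne M) : IsRankOne (c • M) := by
  obtain ⟨a, b, rfl⟩ := h
  exact ⟨c • a, b, by ext p; simp [tensor, mul_assoc]⟩

lemma neg {M : Mat m n} (h : IsRankOne M) : IsRankOne (-M) := by
  simpa using h.smul_s10 (-1)

end IsRankOne

lemma isRankOne_zero : IsRankOne (0 : Mat m n) := ⟨0, 0, by ext p; simp [tensor]⟩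

lemma isRankOne_single (p : Fin m × Fin n) :
    IsRankOne (EuclideanSpace.single p (1 : ℝ) : Mat m n) := by
  refine ⟨EuclideanSpace.single p.1 1, EuclideanSpace.single p.2 1, ?_⟩
  ext q
  simp only [tensor, PiLp.single_apply, Prod.ext_iff, PiLp.toLp_apply]
  split_ifs <;> simp_all

def rowTrunc (h : Mat m n) (k : ℕ) : Mat m n :=
  WithLp.toLp 2 fun p => if (p.1 : ℕ) < k then h p else 0

@[simp] lemma rowTrunc_zero (h : Mat m n) : rowTrunc h 0 = 0 := by
  ext p; simp [rowTrunc]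

lemma rowTrunc_self (h : Mat m n) : rowTrunc h m = h := by
  ext p; simp [rowTrunc]

lemma norm_rowTrunc_le (h : Mat m n) (k : ℕ) : ‖rowTrunc h k‖ ≤ ‖h‖ :=
  EuclideanSpace.norm_le_norm_of_abs_le fun p => by
    simp only [rowTrunc, PiLp.toLp_apply]; split_ifs <;> simp

lemma rowTrunc_succ_sub (h : Mat m n) (k : ℕ) :
    rowTrunc h (k + 1) - rowTrunc h k =
      WithLp.toLp 2 fun p => if (p.1 : ℕ) = k then h p else 0 := by
  ext p
  simp only [rowTrunc, PiLp.sub_apply]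
  split_ifs <;> first | omega | ring

lemma isRankOne_rowTrunc_succ_sub (h : Mat m n) (k : ℕ) :
    IsRankOne (rowTrunc h (k + 1) - rowTrunc h k) := by
  rw [rowTrunc_succ_sub]
  by_cases hk : k < m
  · refine ⟨EuclideanSpace.single ⟨k, hk⟩ 1, WithLp.toLp 2 fun j => h (⟨k, hk⟩, j), ?_⟩
    ext ⟨i, j⟩
    by_cases hi : (i : ℕ) = k
    · obtain rfl : i = ⟨k, hk⟩ := Fin.ext hi
      simp [tensor]
    · have : i ≠ ⟨k, hk⟩ := fun h' => hi (by rw [h'])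
      simp [tensor, hi, this]
  · have hzero : (WithLp.toLp 2 fun p : Fin m × Fin n => if (p.1 : ℕ) = k then h p else 0) = 0 := by
      ext p
      have : (p.1 : ℕ) ≠ k := by omega
      simp [this]
    exact hzero ▸ isRankOne_zero

-- the first `k` rows of `h` followed by row `k` negated
lemma norm_rowTrunc_sub_rowTrunc_succ_sub_le (h : Mat m n) (k : ℕ) :
    ‖rowTrunc h k - (rowTrunc h (k + 1) - rowTrunc h k)‖ ≤ ‖h‖ :=
  EuclideanSpace.norm_le_norm_of_abs_le fun p => by
    rw [rowTrunc_succ_sub]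
    simp only [rowTrunc, PiLp.sub_apply]
    split_ifs <;> first | omega | simp

namespace RankOneConvexOn

variable {U : Set (Mat m n)} {f : Mat m n → ℝ}

theorem convexOn_line (hf : RankOneConvexOn U f) (hU : Convex ℝ U) (x : Mat m n)
    {M : Mat m n} (hM : IsRankOne M) :
    ConvexOn ℝ {s : ℝ | x + s • M ∈ U} (fun s => f (x + s • M)) := by
  have hline : ∀ a b ν : ℝ,
      x + ((1 - ν) • a + ν • b) • M = (1 - ν) • (x + a • M) + ν • (x + b • M) := by
    intro a b ν; module
  refine ⟨fun a ha b hb μ ν hμ hν hμν => ?_, fun a ha b hb μ ν hμ hν hμν => ?_⟩ <;>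
    obtain rfl : μ = 1 - ν := by linarith
  · show x + ((1 - ν) • a + ν • b) • M ∈ U
    rw [hline]
    exact hU ha hb hμ hν hμν
  · have hrk : IsRankOne ((x + b • M) - (x + a • M)) := by
      simpa [← sub_smul] using hM.smul_s10 (b - a)
    show f (x + ((1 - ν) • a + ν • b) • M) ≤ (1 - ν) * f (x + a • M) + ν * f (x + b • M)
    rw [hline]
    exact hf _ _ ha hb (hU.segment_subset ha hb) hrk ν ⟨hν, by linarith⟩

end RankOneConvexOn

namespace RankOneConvexOn

variable {U : Set (Mat m n)} {f : Mat m n → ℝ}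

theorem le_apply_add_rowTrunc (hf : RankOneConvexOn U f) (hU : Convex ℝ U) {x₀ h : Mat m n}
    {K : ℝ} (hball : closedBall x₀ ‖h‖ ⊆ U) (hK : ∀ y ∈ closedBall x₀ ‖h‖, f y ≤ K) (k : ℕ) :
    2 ^ k * f x₀ - (2 ^ k - 1) * K ≤ f (x₀ + rowTrunc h k) := by
  induction k with
  | zero => simp
  | succ k ih =>
    obtain ⟨D, hD⟩ : ∃ D, D = rowTrunc h (k + 1) - rowTrunc h k := ⟨_, rfl⟩
    have hnear : ∀ v, ‖v‖ ≤ ‖h‖ → x₀ + v ∈ closedBall x₀ ‖h‖ := by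
      intro v hv; simpa [mem_closedBall, dist_eq_norm] using hv
    have hback : x₀ + rowTrunc h k + (-1 : ℝ) • D ∈ closedBall x₀ ‖h‖ := by
      convert hnear _ (norm_rowTrunc_sub_rowTrunc_succ_sub_le h k) using 1; rw [hD]; module
    have hfwd : x₀ + rowTrunc h k + (1 : ℝ) • D = x₀ + rowTrunc h (k + 1) := by
      rw [hD, one_smul]; abel
    have hfwd_mem : x₀ + rowTrunc h k + (1 : ℝ) • D ∈ closedBall x₀ ‖h‖ :=
      hfwd ▸ hnear _ (norm_rowTrunc_le h (k + 1))
    -- `x₀ + rowTrunc h k` is the midpoint of the points `hback` and `hfwd_mem` on the rank-one line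
    have hmid := (hf.convexOn_line hU (x₀ + rowTrunc h k) (hD ▸ isRankOne_rowTrunc_succ_sub h k)).2
      (hball hback) (hball hfwd_mem) (by norm_num : (0 : ℝ) ≤ 1 / 2) (by norm_num : (0 : ℝ) ≤ 1 / 2)
      (by norm_num)
    have hval : (1 / 2 : ℝ) * -1 + 1 / 2 * 1 = 0 := by norm_num
    simp only [smul_eq_mul, hval, zero_smul, add_zero, hfwd] at hmid
    have := hK _ hback
    rw [pow_succ]
    linarith

theorem le_apply_add (hf : RankOneConvexOn U f) (hU : Convex ℝ U) {x₀ h : Mat m n} {K : ℝ}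
    (hball : closedBall x₀ ‖h‖ ⊆ U) (hK : ∀ y ∈ closedBall x₀ ‖h‖, f y ≤ K) :
    2 ^ m * f x₀ - (2 ^ m - 1) * K ≤ f (x₀ + h) := by
  simpa [rowTrunc_self] using hf.le_apply_add_rowTrunc hU hball hK m

theorem apply_le_slope_of_hasFDerivAt (hf : RankOneConvexOn U f) (hU : Convex ℝ U)
    {x M : Mat m n} {L : Mat m n →L[ℝ] ℝ} (hL : HasFDerivAt f L x) (hM : IsRankOne M) {t : ℝ}
    (ht : 0 < t) (hx : x ∈ U) (hxt : x + t • M ∈ U) :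
    L M ≤ (f (x + t • M) - f x) / t := by
  have hline : HasDerivAt (fun s : ℝ => x + s • M) M 0 := by
    simpa using ((hasDerivAt_id (0 : ℝ)).smul_const M).const_add x
  have hL' : HasFDerivAt f L (x + (0 : ℝ) • M) := by simpa using hL
  have := (hf.convexOn_line hU x hM).le_slope_of_hasDerivAt (by simpa using hx) hxt ht
    (hL'.comp_hasDerivAt 0 hline)
  simpa [slope_def_field] using this

theorem apply_le_of_le_on_closedBall (hf : RankOneConvexOn U f) (hU : Convex ℝ U)
    {x M : Mat m n} {L : Mat m n →L[ℝ] ℝ} (hL : HasFDerivAt f L x) {t K : ℝ} (ht : 0 < t)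
    (hball : closedBall x t ⊆ U) (hK : ∀ y ∈ closedBall x t, f y ≤ K) (hM : IsRankOne M)
    (hM1 : ‖M‖ ≤ 1) : L M ≤ (K - f x) / t := by
  have hxt : x + t • M ∈ closedBall x t := by
    rw [mem_closedBall, dist_eq_norm, add_sub_cancel_left, norm_smul, Real.norm_of_nonneg ht.le]
    exact mul_le_of_le_one_right ht.le hM1
  calc L M ≤ (f (x + t • M) - f x) / t :=
        hf.apply_le_slope_of_hasFDerivAt hU hL hM ht (hball (mem_closedBall_self ht.le))
          (hball hxt)
    _ ≤ (K - f x) / t := by gcongr; exact hK _ hxt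

theorem norm_le_of_le_on_closedBall (hf : RankOneConvexOn U f) (hU : Convex ℝ U)
    {x : Mat m n} {L : Mat m n →L[ℝ] ℝ} (hL : HasFDerivAt f L x) {t K : ℝ} (ht : 0 < t)
    (hball : closedBall x t ⊆ U) (hK : ∀ y ∈ closedBall x t, f y ≤ K) :
    ‖L‖ ≤ m * n * ((K - f x) / t) := by
  have hB : 0 ≤ (K - f x) / t :=
    div_nonneg (sub_nonneg.mpr (hK x (mem_closedBall_self ht.le))) ht.le
  have hdir := fun M => hf.apply_le_of_le_on_closedBall hU hL ht hball hK (M := M)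
  have hcoord : ∀ p, |L (EuclideanSpace.single p 1)| ≤ (K - f x) / t := by
    intro p
    have hp : ‖(EuclideanSpace.single p (1 : ℝ) : Mat m n)‖ ≤ 1 := by simp
    have hneg := hdir _ (isRankOne_single p).neg (by rwa [norm_neg])
    rw [map_neg] at hneg
    exact abs_le.mpr ⟨by linarith, hdir _ (isRankOne_single p) hp⟩
  simpa [mul_assoc] using EuclideanSpace.opNorm_le_card_mul L hB hcoord

end RankOneConvexOn

end

/-- If a rank-one convex function with f(x₀)=0, Df(x₀)=0 is bounded above by a
paraboloid of opening A, then its gradient grows at most like C·A·|x−x₀|. -/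
theorem stmt10 {m n : ℕ} : ∃ C : ℝ, 0 < C ∧
    ∀ (f : Mat m n → ℝ) (x₀ : Mat m n), RankOneConvexOn (ball 0 1) f →
      x₀ ∈ ball (0 : Mat m n) (1/2) → f x₀ = 0 →
      HasFDerivAt f (0 : Mat m n →L[ℝ] ℝ) x₀ →
      ∀ A : ℝ, 0 ≤ A → (∀ x ∈ ball (0 : Mat m n) 1, f x ≤ (A/2) * ‖x - x₀‖^2) →
      ∀ x : Mat m n, ‖x - x₀‖ < 1/4 →
        ∀ L : Mat m n →L[ℝ] ℝ, HasFDerivAt f L x →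
          ‖L - (0 : Mat m n →L[ℝ] ℝ)‖ ≤ C * A * ‖x - x₀‖ := by
  refine ⟨(m * n + 1) * (2 ^ m + 3), by positivity, ?_⟩
  intro f x₀ hf hx₀ hf0 hdf A hA hub x hx L hL
  rw [sub_zero]
  rcases (norm_nonneg (x - x₀)).eq_or_lt with ht | ht
  · obtain rfl : x = x₀ := sub_eq_zero.mp (norm_eq_zero.mp ht.symm)
    simp [hL.unique hdf]
  set t := ‖x - x₀‖
  have hball : closedBall x₀ (2 * t) ⊆ ball 0 1 := closedBall_subset_ball' <| by
    rw [mem_ball, dist_zero_right] at hx₀; rw [dist_zero_right]; linarith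
  have hpara : ∀ r, ∀ y ∈ closedBall x₀ r, closedBall x₀ r ⊆ closedBall x₀ (2 * t) →
      f y ≤ A / 2 * r ^ 2 := fun r y hy hr =>
    (hub y (hball (hr hy))).trans (by gcongr; exact mem_closedBall_iff_norm.mp hy)
  have hinner : closedBall x₀ t ⊆ closedBall x₀ (2 * t) :=
    closedBall_subset_closedBall (by linarith)
  have hnear : closedBall x t ⊆ closedBall x₀ (2 * t) :=
    closedBall_subset_closedBall' (by rw [dist_eq_norm]; linarith)
  have hlow : -((2 ^ m - 1) * (A / 2 * t ^ 2)) ≤ f x := by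
    simpa [hf0] using hf.le_apply_add (convex_ball 0 1) (hinner.trans hball)
      fun y hy => hpara t y hy hinner
  have hup : ∀ y ∈ closedBall x t, f y ≤ 2 * A * t ^ 2 := fun y hy =>
    (hpara (2 * t) y (hnear hy) subset_rfl).trans_eq (by ring)
  have hnorm := hf.norm_le_of_le_on_closedBall (convex_ball 0 1) hL ht (hnear.trans hball) hup
  have hslope : (2 * A * t ^ 2 - f x) / t ≤ (2 ^ m + 3) * A * t := by
    rw [div_le_iff₀ ht]
    nlinarith [mul_nonneg (mul_nonneg hA (sq_nonneg t)) (pow_nonneg zero_le_two m)]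
  calc ‖L‖ ≤ m * n * ((2 * A * t ^ 2 - f x) / t) := hnorm
    _ ≤ m * n * ((2 ^ m + 3) * A * t) := by gcongr
    _ ≤ (m * n + 1) * ((2 ^ m + 3) * A * t) := by gcongr; linarith
    _ = _ := by ring
end
end

section
/- Let f be separately convex on ℝⁿ (convex in each coordinate variable separately), with f(0) = 0, f ≤ G on a ball B where G(x) = g(|x|) for a nondecreasing continuous g, and suppose f(x) ≥ 0 whenever x is a multiple of a standard basis vector (e.g. because f is differentiable at 0 with Df(0) = 0). Then f(x) ≥ −C(n)·G(x) for all x ∈ B, with C(n) = 2ⁿ. -/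
open Metric Set

noncomputable section

/-- f is separately convex: convex in each coordinate variable. -/
def SeparatelyConvex (n : ℕ) (f : EuclideanSpace ℝ (Fin n) → ℝ) : Prop :=
  ∀ (i : Fin n) (x : EuclideanSpace ℝ (Fin n)),
    ConvexOn ℝ univ fun t : ℝ => f (x + t • EuclideanSpace.single i 1)

/-- Lower bound lemma for separately convex functions: f ≥ −2ⁿ·G on the ball. -/
theorem stmt15 (n : ℕ) (f : EuclideanSpace ℝ (Fin n) → ℝ) (hf : SeparatelyConvex n f)
    (hf0 : f 0 = 0) (r : ℝ) (g : ℝ → ℝ) (hg : Monotone g) (hgc : Continuous g)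
    (hfg : ∀ x ∈ ball (0 : EuclideanSpace ℝ (Fin n)) r, f x ≤ g ‖x‖)
    (hax : ∀ (i : Fin n) (c : ℝ), c • EuclideanSpace.single i 1 ∈ ball (0 : EuclideanSpace ℝ (Fin n)) r →
      0 ≤ f (c • EuclideanSpace.single i 1)) :
    ∀ x ∈ ball (0 : EuclideanSpace ℝ (Fin n)) r, -((2:ℝ)^n) * g ‖x‖ ≤ f x := by
  intro x hx
  have hxr : ‖x‖ < r := by simpa [mem_ball_zero_iff] using hx
  have hr : (0:ℝ) < r := lt_of_le_of_lt (norm_nonneg x) hxr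
  have h0mem : (0 : EuclideanSpace ℝ (Fin n)) ∈ ball (0 : EuclideanSpace ℝ (Fin n)) r := by
    simpa [mem_ball_zero_iff] using hr
  have hg0 : 0 ≤ g ‖x‖ := by
    have h1 := hfg 0 h0mem
    rw [hf0, norm_zero] at h1
    exact h1.trans (hg (norm_nonneg x))
  set T : ℕ → EuclideanSpace ℝ (Fin n) := fun k => WithLp.toLp 2 (fun j => if (j:ℕ) < k then x j else 0) with hT
  have hnorm_le : ∀ z : EuclideanSpace ℝ (Fin n), (∀ j, ‖z j‖ ≤ ‖x j‖) → ‖z‖ ≤ ‖x‖ := by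
    intro z hz
    rw [EuclideanSpace.norm_eq, EuclideanSpace.norm_eq]
    apply Real.sqrt_le_sqrt
    apply Finset.sum_le_sum
    intro j _
    exact pow_le_pow_left₀ (norm_nonneg _) (hz j) 2
  have hTnorm : ∀ k, ‖T k‖ ≤ ‖x‖ := by
    intro k
    apply hnorm_le
    intro j
    by_cases h : (j:ℕ) < k <;> simp [hT, h]
  have key : ∀ i : Fin n, 2 * f (T i) - g ‖x‖ ≤ f (T ((i:ℕ)+1)) := by
    intro i
    have hconv := hf i (T i)
    have h2 := hconv.2 (mem_univ (x i)) (mem_univ (-(x i)))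
      (by norm_num : (0:ℝ) ≤ 1/2) (by norm_num : (0:ℝ) ≤ 1/2) (by norm_num)
    have hzero : (1/2 : ℝ) • (x i) + (1/2 : ℝ) • (-(x i)) = 0 := by
      simp
    rw [hzero] at h2
    simp only [zero_smul, add_zero, smul_eq_mul] at h2
    -- identify the two points
    have e1 : T (i:ℕ) + (x i) • EuclideanSpace.single i (1:ℝ) = T ((i:ℕ)+1) := by
      ext j
      simp only [hT, PiLp.add_apply, PiLp.toLp_apply, PiLp.smul_apply, EuclideanSpace.single_apply,
        smul_eq_mul]
      by_cases hji : j = i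
      · subst hji; simp
      · have hne : (j:ℕ) ≠ (i:ℕ) := fun h => hji (Fin.ext h)
        by_cases hlt : (j:ℕ) < (i:ℕ)
        · have : (j:ℕ) < (i:ℕ)+1 := by omega
          simp [hji, hlt, this]
        · have h2' : ¬ (j:ℕ) < (i:ℕ)+1 := by omega
          simp [hji, hlt, h2']
    set y : EuclideanSpace ℝ (Fin n) := T (i:ℕ) + (-(x i)) • EuclideanSpace.single i (1:ℝ) with hy
    have hynorm : ‖y‖ ≤ ‖x‖ := by
      apply hnorm_le
      intro j
      simp only [hy, hT, PiLp.add_apply, PiLp.toLp_apply, PiLp.smul_apply, EuclideanSpace.single_apply,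
        smul_eq_mul]
      by_cases hji : j = i
      · subst hji; simp
      · by_cases hlt : (j:ℕ) < (i:ℕ) <;> simp [hji, hlt]
    have hymem : y ∈ ball (0 : EuclideanSpace ℝ (Fin n)) r := by
      rw [mem_ball_zero_iff]; exact lt_of_le_of_lt hynorm hxr
    have hfy : f y ≤ g ‖x‖ := (hfg y hymem).trans (hg hynorm)
    rw [e1] at h2

    linarith
  have main : ∀ k, k ≤ n → -((2:ℝ)^k - 1) * g ‖x‖ ≤ f (T k) := by
    intro k
    induction k with
    | zero =>
      intro _
      have hT0 : T 0 = 0 := by ext j; simp [hT]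
      rw [hT0, hf0]
      simp
    | succ k ih =>
      intro hk
      have hk' : k < n := hk
      have ihk := ih (le_of_lt hk')
      have hkey := key ⟨k, hk'⟩
      have hp : (2:ℝ)^(k+1) = 2 * 2^k := by rw [pow_succ]; ring
      simp only [Fin.val_mk] at hkey
      nlinarith [hg0]
  have hTn : T n = x := by
    ext j
    simp [hT, j.isLt]
  have := main n le_rfl
  rw [hTn] at this
  nlinarith [hg0]
end
end
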